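/- For g >= 2 and k >= 1, the Verlinde formula value ((k+2)/2)^{g-1} * sum_{j=1}^{k+1} (sin(pi*j/(k+2)))^{2-2g} is a positive real number, and in fact is a positive integer. -/

import Mathlib

open Real Finset


/-- Sum of cosines `∑_{a<n} cos(mπa/n)`. -/
lemma S_val (n : ℕ) (hn : 1 ≤ n) (m : ℤ) :
    ∑ a ∈ Finset.range n, Real.cos (m * π * a / n) =
      if (2*(n:ℤ)) ∣ m then (n:ℝ) else if 2 ∣ m then 0 else 1 := by
  have hn0 : (n:ℝ) ≠ 0 := by positivity
  have hn0' : (n:ℂ) ≠ 0 := by exact_mod_cast (by positivity : (n:ℝ) ≠ 0)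
  have hπI : (π:ℂ) * Complex.I ≠ 0 := by
    exact mul_ne_zero (by exact_mod_cast Real.pi_ne_zero) Complex.I_ne_zero
  set z : ℂ := Complex.exp (m * π * Complex.I / n) with hz
  have hre : ∀ a : ℕ, Real.cos (m * π * a / n) = (z ^ a).re := by
    intro a
    rw [hz, ← Complex.exp_nat_mul]
    rw [show (a:ℂ) * ((m:ℂ) * π * Complex.I / n) = ((m * π * a / n : ℝ) : ℂ) * Complex.I by
      push_cast; ring]
    rw [Complex.exp_ofReal_mul_I_re]
  have hsum : ∑ a ∈ Finset.range n, Real.cos (m * π * a / n)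
      = (∑ a ∈ Finset.range n, z ^ a).re := by
    rw [Complex.re_sum]; exact Finset.sum_congr rfl fun a _ => hre a
  by_cases hdvd : (2*(n:ℤ)) ∣ m
  · rw [if_pos hdvd]
    obtain ⟨l, hl⟩ := hdvd
    have hz1 : z = 1 := by
      rw [hz, Complex.exp_eq_one_iff]
      refine ⟨l, ?_⟩
      rw [hl]; push_cast; field_simp
    rw [hsum, hz1]
    simp
  · rw [if_neg hdvd]
    have hz1 : z ≠ 1 := by
      intro h
      rw [hz, Complex.exp_eq_one_iff] at h
      obtain ⟨l, hl⟩ := h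
      apply hdvd
      refine ⟨l, ?_⟩
      rw [div_eq_iff hn0'] at hl
      have h2 : (m:ℂ) * (π * Complex.I) = ((2*(n:ℤ)*l : ℤ) : ℂ) * (π * Complex.I) := by
        push_cast
        linear_combination hl
      exact_mod_cast mul_right_cancel₀ hπI h2
    have hzn : z ^ n = (-1 : ℂ) ^ m := by
      rw [hz, ← Complex.exp_nat_mul]
      rw [show (n:ℂ) * ((m:ℂ) * π * Complex.I / n) = (m:ℤ) * (π * Complex.I) by
        field_simp]
      rw [Complex.exp_int_mul, Complex.exp_pi_mul_I]
    rw [hsum, geom_sum_eq hz1, hzn]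
    by_cases hev : (2:ℤ) ∣ m
    · rw [if_pos hev]
      obtain ⟨l, hl⟩ := hev
      have : (-1 : ℂ) ^ m = 1 := by
        rw [hl, zpow_mul]
        norm_num
      rw [this]
      simp
    · rw [if_neg hev]
      have hodd : Odd m := by
        rcases Int.even_or_odd m with h | h
        · exact absurd h.two_dvd hev
        · exact h
      have : (-1 : ℂ) ^ m = -1 := Odd.neg_one_zpow hodd
      rw [this]
      set s : ℂ := (-1 - 1) / (z - 1) with hs
      have hzinv : (starRingEnd ℂ) z = z⁻¹ := by
        rw [hz, ← Complex.exp_conj, ← Complex.exp_neg]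
        congr 1
        simp [map_div₀]
        ring
      have hz0 : z ≠ 0 := Complex.exp_ne_zero _
      have hne : z - 1 ≠ 0 := sub_ne_zero.mpr hz1
      have hne2 : z⁻¹ - 1 ≠ 0 := sub_ne_zero.mpr (by rwa [ne_eq, inv_eq_one])
      have hne3 : (1:ℂ) - z ≠ 0 := sub_ne_zero.mpr (Ne.symm hz1)
      have hconj : s + (starRingEnd ℂ) s = 2 := by
        rw [hs, map_div₀, map_sub, map_sub, hzinv]
        simp only [map_one, map_neg]
        field_simp [hne3]
        ring
      have h3 : ((2 * s.re : ℝ) : ℂ) = ((2 : ℝ) : ℂ) := by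
        rw [← Complex.add_conj, hconj]; norm_num
      have h4 : 2 * s.re = 2 := by exact_mod_cast h3
      linarith

lemma sum_shift (n : ℕ) (hn : 1 ≤ n) (f : ℕ → ℝ) :
    ∑ a ∈ Finset.range n, f a = f 0 + ∑ a ∈ Finset.Icc 1 (n-1), f a := by
  have h1 : Finset.Icc 1 (n-1) = Finset.Ico 1 n := by
    ext x; simp only [Finset.mem_Icc, Finset.mem_Ico]; omega
  rw [h1, Finset.range_eq_Ico, ← Finset.sum_Ico_consecutive f (Nat.zero_le 1) hn]
  congr 1
  simp

lemma not_dvd_small {n : ℕ} (m : ℤ) (hm0 : m ≠ 0) (hm : |m| < 2*(n:ℤ)) : ¬ (2*(n:ℤ)) ∣ m := by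
  intro h
  have h2 : (2*(n:ℤ)) ∣ |m| := (dvd_abs _ _).mpr h
  have h3 := Int.le_of_dvd (abs_pos.mpr hm0) h2
  omega

lemma S_Icc (n : ℕ) (hn : 1 ≤ n) (m : ℤ) :
    ∑ a ∈ Finset.Icc 1 (n-1), Real.cos (m * π * a / n) =
      (if (2*(n:ℤ)) ∣ m then (n:ℝ) else if 2 ∣ m then 0 else 1) - 1 := by
  have h1 := S_val n hn m
  have h2 := sum_shift n hn (fun a => Real.cos (m * π * a / n))
  simp only [Nat.cast_zero, mul_zero, zero_div, Real.cos_zero] at h2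
  rw [h2] at h1
  linarith

lemma orth (n : ℕ) (hn : 2 ≤ n) {i j : ℕ} (hi : i ∈ Finset.Icc 1 (n-1))
    (hj : j ∈ Finset.Icc 1 (n-1)) :
    ∑ a ∈ Finset.Icc 1 (n-1), Real.sin (π*i*a/n) * Real.sin (π*j*a/n)
      = if i = j then (n:ℝ)/2 else 0 := by
  have hn1 : 1 ≤ n := le_trans one_le_two hn
  obtain ⟨hi1, hi2⟩ := Finset.mem_Icc.mp hi
  obtain ⟨hj1, hj2⟩ := Finset.mem_Icc.mp hj
  have hi2' : i ≤ n - 1 := hi2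
  have trig : ∀ a : ℕ, Real.sin (π*i*a/n) * Real.sin (π*j*a/n)
      = (Real.cos ((((i:ℤ)-j : ℤ) : ℝ)*π*a/n) - Real.cos ((((i:ℤ)+j : ℤ) : ℝ)*π*a/n))/2 := by
    intro a
    have h := Real.cos_sub_cos ((((i:ℤ)-j : ℤ) : ℝ)*π*a/n) ((((i:ℤ)+j : ℤ) : ℝ)*π*a/n)
    have e1 : (((((i:ℤ)-j : ℤ) : ℝ)*π*a/n) + ((((i:ℤ)+j : ℤ) : ℝ)*π*a/n))/2 = π*i*a/n := by
      push_cast; ring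
    have e2 : (((((i:ℤ)-j : ℤ) : ℝ)*π*a/n) - ((((i:ℤ)+j : ℤ) : ℝ)*π*a/n))/2 = -(π*j*a/n) := by
      push_cast; ring
    rw [e1, e2, Real.sin_neg] at h
    linarith
  rw [Finset.sum_congr rfl fun a _ => trig a]
  rw [← Finset.sum_div, Finset.sum_sub_distrib, S_Icc n hn1, S_Icc n hn1]
  have hd2 : ¬ (2*(n:ℤ)) ∣ ((i:ℤ)+j) := by
    apply not_dvd_small _ (by omega)
    rw [abs_of_nonneg (by positivity)]
    omega
  by_cases hij : i = j
  · subst hij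
    rw [if_pos rfl]
    have h0 : ((i:ℤ) - i) = 0 := sub_self _
    rw [h0, if_pos (dvd_zero _), if_neg hd2, if_pos ⟨(i:ℤ), by ring⟩]
    ring
  · rw [if_neg hij]
    have hd1 : ¬ (2*(n:ℤ)) ∣ ((i:ℤ)-j) := by
      apply not_dvd_small _ (by omega)
      rw [abs_lt]
      constructor <;> omega
    rw [if_neg hd1, if_neg hd2]
    by_cases hp : (2:ℤ) ∣ (i:ℤ)-j
    · have hp2 : (2:ℤ) ∣ (i:ℤ)+j := by omega
      rw [if_pos hp, if_pos hp2]
      ring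
    · have hp2 : ¬(2:ℤ) ∣ (i:ℤ)+j := by omega
      rw [if_neg hp, if_neg hp2]
      ring

lemma sin_pos_of_mem (n : ℕ) (hn : 2 ≤ n) {j : ℕ} (hj : j ∈ Finset.Icc 1 (n-1)) :
    0 < Real.sin (π*j/n) := by
  obtain ⟨hj1, hj2⟩ := Finset.mem_Icc.mp hj
  apply Real.sin_pos_of_pos_of_lt_pi
  · have : (0:ℝ) < (j:ℝ) := by exact_mod_cast hj1
    have : (0:ℝ) < (n:ℝ) := by positivity
    positivity
  · rw [div_lt_iff₀ (by positivity : (0:ℝ) < (n:ℝ))]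
    have hjn : (j:ℝ) < (n:ℝ) := by exact_mod_cast (by omega : j < n)
    have := mul_lt_mul_of_pos_left hjn Real.pi_pos
    linarith

lemma Mone (n : ℕ) (hn : 2 ≤ n) : ∀ c : ℕ, c ≤ n →
    ∑ j ∈ Finset.Icc 1 (n-1), Real.sin (π*c*j/n) / Real.sin (π*j/n)
      = if 2 ∣ c then 0 else (n:ℝ) - c := by
  intro c
  induction c using Nat.twoStepInduction with
  | zero =>
    intro _
    rw [if_pos (dvd_zero 2)]
    apply Finset.sum_eq_zero
    intro j _
    norm_num
  | one =>
    intro _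
    rw [if_neg (by omega)]
    have h1 : ∀ j ∈ Finset.Icc 1 (n-1),
        Real.sin (π*(1:ℕ)*j/n) / Real.sin (π*j/n) = 1 := by
      intro j hj
      rw [show π*((1:ℕ):ℝ)*j/n = π*j/n by push_cast; ring]
      exact div_self (ne_of_gt (sin_pos_of_mem n hn hj))
    rw [Finset.sum_congr rfl h1, Finset.sum_const, Nat.card_Icc, nsmul_eq_mul]
    have : n - 1 + 1 - 1 = n - 1 := by omega
    rw [this]
    push_cast [Nat.cast_sub (by omega : 1 ≤ n)]
    ring
  | more c ih _ =>
    intro hc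
    have hstep : ∀ j ∈ Finset.Icc 1 (n-1),
        Real.sin (π*(c+2:ℕ)*j/n) / Real.sin (π*j/n)
          = Real.sin (π*c*j/n) / Real.sin (π*j/n) + 2 * Real.cos (((c:ℝ)+1)*π*j/n) := by
      intro j hj
      have hs := sin_pos_of_mem n hn hj
      have h := Real.sin_sub_sin (π*(c+2:ℕ)*j/n) (π*c*j/n)
      have e1 : (π*(c+2:ℕ)*j/n - π*c*j/n)/2 = π*j/n := by push_cast; ring
      have e2 : (π*(c+2:ℕ)*j/n + π*c*j/n)/2 = ((c:ℝ)+1)*π*j/n := by push_cast; ring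
      rw [e1, e2] at h
      have hgoal : Real.sin (π*(c+2:ℕ)*j/n)
          = Real.sin (π*c*j/n) + 2 * Real.cos (((c:ℝ)+1)*π*j/n) * Real.sin (π*j/n) := by
        push_cast at h ⊢
        linarith
      rw [hgoal, add_div, mul_div_assoc (2 * Real.cos (((c:ℝ)+1)*π*j/n)), div_self (ne_of_gt hs), mul_one]
    have hS := S_Icc n (by omega : 1 ≤ n) ((c:ℤ)+1)
    push_cast at hS
    rw [Finset.sum_congr rfl hstep, Finset.sum_add_distrib, ← Finset.mul_sum, hS,
      ih (by omega)]
    by_cases hp : 2 ∣ c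
    · have hq : ¬ (2:ℤ) ∣ (c:ℤ)+1 := by obtain ⟨l, hl⟩ := hp; subst hl; push_cast; omega
      have hnd : ¬ (2*(n:ℤ)) ∣ ((c:ℤ)+1) := by
        apply not_dvd_small _ (by omega)
        rw [abs_of_nonneg (by positivity)]
        push_cast
        omega
      rw [if_neg hnd, if_pos hp, if_pos (by obtain ⟨l, hl⟩ := hp; exact ⟨l+1, by omega⟩ : 2 ∣ c + 2), if_neg hq]
      push_cast
      ring
    · have hq : (2:ℤ) ∣ (c:ℤ)+1 := by
        obtain ⟨l, hl⟩ := (by omega : 2 ∣ c + 1)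
        exact ⟨(l:ℤ), by exact_mod_cast hl⟩
      have hnd : ¬ (2*(n:ℤ)) ∣ ((c:ℤ)+1) := by
        apply not_dvd_small _ (by omega)
        rw [abs_of_nonneg (by positivity)]
        push_cast
        omega
      rw [if_neg hnd, if_neg hp, if_neg (fun ⟨l, hl⟩ => hp ⟨l-1, by omega⟩ : ¬ 2 ∣ c + 2), if_pos hq]
      push_cast
      ring

lemma sin_add_sin' (x y : ℝ) :
    Real.sin x + Real.sin y = 2 * Real.sin ((x+y)/2) * Real.cos ((x-y)/2) := by
  have h1 := Real.sin_add ((x+y)/2) ((x-y)/2)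
  have h2 := Real.sin_sub ((x+y)/2) ((x-y)/2)
  have e1 : (x+y)/2 + (x-y)/2 = x := by ring
  have e2 : (x+y)/2 - (x-y)/2 = y := by ring
  rw [e1] at h1
  rw [e2] at h2
  linarith

noncomputable def Mv (n a c : ℕ) : ℝ :=
  ∑ j ∈ Finset.Icc 1 (n-1), Real.sin (π*a*j/n) * Real.sin (π*c*j/n) / Real.sin (π*j/n)^2

lemma Mv_zero_left (n c : ℕ) : Mv n 0 c = 0 := by
  apply Finset.sum_eq_zero
  intro j _
  norm_num

lemma Mv_zero_right (n a : ℕ) : Mv n a 0 = 0 := by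
  apply Finset.sum_eq_zero
  intro j _
  norm_num

lemma Mv_n_right (n a : ℕ) (hn : 2 ≤ n) : Mv n a n = 0 := by
  apply Finset.sum_eq_zero
  intro j _
  have hn0 : (n:ℝ) ≠ 0 := by positivity
  rw [show π*(n:ℝ)*j/n = j*π by field_simp, Real.sin_nat_mul_pi]
  simp

lemma Mv_one (n : ℕ) (hn : 2 ≤ n) (c : ℕ) (hc : c ≤ n) :
    Mv n 1 c = if 2 ∣ c then 0 else (n:ℝ) - c := by
  rw [← Mone n hn c hc]
  apply Finset.sum_congr rfl
  intro j hj
  have hs := sin_pos_of_mem n hn hj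
  rw [show π*((1:ℕ):ℝ)*j/n = π*j/n by push_cast; ring, sq,
    mul_div_mul_left _ _ (ne_of_gt hs)]

lemma Mv_rec (n : ℕ) (hn : 2 ≤ n) (a c : ℕ) (hc1 : 1 ≤ c) (hc2 : c ≤ n-1) :
    Mv n (a+2) c = Mv n (a+1) (c+1) + Mv n (a+1) (c-1) - Mv n a c := by
  unfold Mv
  rw [← Finset.sum_add_distrib, ← Finset.sum_sub_distrib]
  apply Finset.sum_congr rfl
  intro j hj
  have hs := sin_pos_of_mem n hn hj
  have h1 := sin_add_sin' (π*(a+2:ℕ)*j/n) (π*a*j/n)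
  have e1 : (π*(a+2:ℕ)*j/n + π*a*j/n)/2 = π*(a+1:ℕ)*j/n := by push_cast; ring
  have e2 : (π*(a+2:ℕ)*j/n - π*a*j/n)/2 = π*j/n := by push_cast; ring
  rw [e1, e2] at h1
  have h2 := sin_add_sin' (π*(c+1:ℕ)*j/n) (π*(c-1:ℕ)*j/n)
  have e3 : (π*(c+1:ℕ)*j/n + π*(c-1:ℕ)*j/n)/2 = π*c*j/n := by
    push_cast [Nat.cast_sub hc1]; ring
  have e4 : (π*(c+1:ℕ)*j/n - π*(c-1:ℕ)*j/n)/2 = π*j/n := by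
    push_cast [Nat.cast_sub hc1]; ring
  rw [e3, e4] at h2
  rw [← add_div, ← sub_div]
  congr 1
  linear_combination Real.sin (π*c*j/n) * h1 - Real.sin (π*(a+1:ℕ)*j/n) * h2

lemma Mv_int (n : ℕ) (hn : 2 ≤ n) : ∀ a c : ℕ, c ≤ n → ∃ z : ℤ, Mv n a c = z := by
  intro a
  induction a using Nat.twoStepInduction with
  | zero =>
    intro c _
    exact ⟨0, by rw [Mv_zero_left]; norm_num⟩
  | one =>
    intro c hc
    refine ⟨if 2 ∣ c then 0 else (n:ℤ) - c, ?_⟩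
    rw [Mv_one n hn c hc]
    split <;> push_cast <;> norm_num
  | more a ih1 ih2 =>
    intro c hc
    rcases Nat.eq_zero_or_pos c with hc0 | hcpos
    · subst hc0
      exact ⟨0, by rw [Mv_zero_right]; norm_num⟩
    rcases eq_or_lt_of_le hc with hcn | hcn
    · exact ⟨0, by rw [hcn, Mv_n_right n (a+2) hn]; norm_num⟩
    · obtain ⟨z1, hz1⟩ := ih2 (c+1) (by omega)
      obtain ⟨z2, hz2⟩ := ih2 (c-1) (by omega)
      obtain ⟨z3, hz3⟩ := ih1 c (by omega)
      refine ⟨z1 + z2 - z3, ?_⟩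
      rw [Mv_rec n hn a c (by omega) (by omega), hz1, hz2, hz3]
      push_cast
      ring

noncomputable def Tv (n j : ℕ) : ℝ := ((n:ℝ)/2) / Real.sin (π*j/n)^2

noncomputable def Fv (n m a b : ℕ) : ℝ :=
  ∑ j ∈ Finset.Icc 1 (n-1), (2/(n:ℝ)) * (Real.sin (π*a*j/n) * Real.sin (π*b*j/n)) * Tv n j ^ m

lemma swap_arg (n x y : ℕ) : π*(x:ℝ)*y/n = π*(y:ℝ)*x/n := by ring

lemma Fv_zero (n : ℕ) (hn : 2 ≤ n) {a b : ℕ} (ha : a ∈ Finset.Icc 1 (n-1))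
    (hb : b ∈ Finset.Icc 1 (n-1)) :
    Fv n 0 a b = if a = b then 1 else 0 := by
  have hn0 : (n:ℝ) ≠ 0 := by positivity
  unfold Fv
  have : ∀ j ∈ Finset.Icc 1 (n-1),
      (2/(n:ℝ)) * (Real.sin (π*a*j/n) * Real.sin (π*b*j/n)) * Tv n j ^ 0
        = (2/(n:ℝ)) * (Real.sin (π*a*j/n) * Real.sin (π*b*j/n)) := by
    intro j _; rw [pow_zero, mul_one]
  rw [Finset.sum_congr rfl this, ← Finset.mul_sum, orth n hn ha hb]
  split
  · field_simp
  · rw [mul_zero]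

lemma Fv_one (n : ℕ) (hn : 2 ≤ n) (a b : ℕ) : Fv n 1 a b = Mv n a b := by
  have hn0 : (n:ℝ) ≠ 0 := by positivity
  unfold Fv Mv Tv
  apply Finset.sum_congr rfl
  intro j hj
  have hs := sin_pos_of_mem n hn hj
  rw [pow_one]
  field_simp

lemma Fv_succ (n : ℕ) (hn : 2 ≤ n) (m : ℕ) {a b : ℕ} (ha : a ∈ Finset.Icc 1 (n-1))
    (hb : b ∈ Finset.Icc 1 (n-1)) :
    Fv n (m+1) a b = ∑ c ∈ Finset.Icc 1 (n-1), Mv n a c * Fv n m c b := by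
  have hn0 : (n:ℝ) ≠ 0 := by positivity
  unfold Fv Mv
  -- expand products of sums
  have step1 : ∀ c ∈ Finset.Icc 1 (n-1),
      (∑ j ∈ Finset.Icc 1 (n-1), Real.sin (π*a*j/n) * Real.sin (π*c*j/n) / Real.sin (π*j/n)^2)
        * (∑ j' ∈ Finset.Icc 1 (n-1),
            (2/(n:ℝ)) * (Real.sin (π*c*j'/n) * Real.sin (π*b*j'/n)) * Tv n j' ^ m)
      = ∑ j ∈ Finset.Icc 1 (n-1), ∑ j' ∈ Finset.Icc 1 (n-1),
          (Real.sin (π*a*j/n) * Real.sin (π*c*j/n) / Real.sin (π*j/n)^2)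
            * ((2/(n:ℝ)) * (Real.sin (π*c*j'/n) * Real.sin (π*b*j'/n)) * Tv n j' ^ m) := by
    intro c _
    rw [Finset.sum_mul_sum]
  rw [Finset.sum_congr rfl step1]
  rw [Finset.sum_comm]
  have step2 : ∀ j ∈ Finset.Icc 1 (n-1),
      ∑ c ∈ Finset.Icc 1 (n-1), ∑ j' ∈ Finset.Icc 1 (n-1),
          (Real.sin (π*a*j/n) * Real.sin (π*c*j/n) / Real.sin (π*j/n)^2)
            * ((2/(n:ℝ)) * (Real.sin (π*c*j'/n) * Real.sin (π*b*j'/n)) * Tv n j' ^ m)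
      = ∑ j' ∈ Finset.Icc 1 (n-1),
          (Real.sin (π*a*j/n) / Real.sin (π*j/n)^2)
            * ((2/(n:ℝ)) * Real.sin (π*b*j'/n) * Tv n j' ^ m)
            * (if j = j' then (n:ℝ)/2 else 0) := by
    intro j hj
    rw [Finset.sum_comm]
    apply Finset.sum_congr rfl
    intro j' hj'
    have : ∀ c ∈ Finset.Icc 1 (n-1),
        (Real.sin (π*a*j/n) * Real.sin (π*c*j/n) / Real.sin (π*j/n)^2)
          * ((2/(n:ℝ)) * (Real.sin (π*c*j'/n) * Real.sin (π*b*j'/n)) * Tv n j' ^ m)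
        = (Real.sin (π*a*j/n) / Real.sin (π*j/n)^2)
            * ((2/(n:ℝ)) * Real.sin (π*b*j'/n) * Tv n j' ^ m)
            * (Real.sin (π*j*c/n) * Real.sin (π*j'*c/n)) := by
      intro c _
      rw [swap_arg n j c, swap_arg n j' c]
      ring
    rw [Finset.sum_congr rfl this, ← Finset.mul_sum, orth n hn hj hj']
  rw [Finset.sum_congr rfl step2]
  apply Finset.sum_congr rfl
  intro j hj
  have step3 : ∀ j' ∈ Finset.Icc 1 (n-1),
      (Real.sin (π*a*j/n) / Real.sin (π*j/n)^2)
          * ((2/(n:ℝ)) * Real.sin (π*b*j'/n) * Tv n j' ^ m)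
          * (if j = j' then (n:ℝ)/2 else 0)
        = if j = j' then
            (Real.sin (π*a*j/n) / Real.sin (π*j/n)^2)
              * ((2/(n:ℝ)) * Real.sin (π*b*j'/n) * Tv n j' ^ m) * ((n:ℝ)/2)
          else 0 := by
    intro j' _
    split <;> ring
  rw [Finset.sum_congr rfl step3, Finset.sum_ite_eq, if_pos hj]
  simp only [Tv]
  rw [pow_succ]
  ring

lemma exists_int_sum {ι : Type*} (s : Finset ι) (f : ι → ℝ)
    (h : ∀ i ∈ s, ∃ z : ℤ, f i = z) : ∃ z : ℤ, ∑ i ∈ s, f i = z := by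
  classical
  induction s using Finset.induction with
  | empty => exact ⟨0, by simp⟩
  | insert x s' hnotmem ih =>
    obtain ⟨z1, hz1⟩ := h x (Finset.mem_insert_self x s')
    obtain ⟨z2, hz2⟩ := ih (fun i hi => h i (Finset.mem_insert_of_mem hi))
    exact ⟨z1 + z2, by rw [Finset.sum_insert hnotmem, hz1, hz2]; push_cast; ring⟩

lemma Fv_int (n : ℕ) (hn : 2 ≤ n) : ∀ m a b : ℕ, a ∈ Finset.Icc 1 (n-1) →
    b ∈ Finset.Icc 1 (n-1) → ∃ z : ℤ, Fv n m a b = z := by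
  intro m
  induction m with
  | zero =>
    intro a b ha hb
    refine ⟨if a = b then 1 else 0, ?_⟩
    rw [Fv_zero n hn ha hb]
    split <;> norm_num
  | succ m ih =>
    intro a b ha hb
    rw [Fv_succ n hn m ha hb]
    apply exists_int_sum
    intro c hc
    obtain ⟨z1, h1⟩ := Mv_int n hn a c (by obtain ⟨h1, h2⟩ := Finset.mem_Icc.mp hc; omega)
    obtain ⟨z2, h2⟩ := ih c b hc hb
    exact ⟨z1*z2, by rw [h1, h2]; push_cast; ring⟩

lemma trace_eq (n : ℕ) (hn : 2 ≤ n) (m : ℕ) :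
    ∑ a ∈ Finset.Icc 1 (n-1), Fv n m a a = ∑ j ∈ Finset.Icc 1 (n-1), Tv n j ^ m := by
  have hn0 : (n:ℝ) ≠ 0 := by positivity
  unfold Fv
  rw [Finset.sum_comm]
  apply Finset.sum_congr rfl
  intro j hj
  have h1 : ∀ a ∈ Finset.Icc 1 (n-1),
      (2/(n:ℝ)) * (Real.sin (π*a*j/n) * Real.sin (π*a*j/n)) * Tv n j ^ m
        = ((2/(n:ℝ)) * Tv n j ^ m) * (Real.sin (π*j*a/n) * Real.sin (π*j*a/n)) := by
    intro a _
    rw [swap_arg n a j]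
    ring
  rw [Finset.sum_congr rfl h1, ← Finset.mul_sum, orth n hn hj hj, if_pos rfl]
  field_simp

/-- For `g ≥ 2` and `k ≥ 1`, the Verlinde formula value
`((k+2)/2)^{g-1} ∑_{j=1}^{k+1} sin(πj/(k+2))^{2-2g}` is a positive real
number, and in fact is a positive integer. -/
theorem verlinde_pos_integer (g k : ℕ) (hg : 2 ≤ g) (hk : 1 ≤ k) :
    0 < (((k : ℝ) + 2) / 2) ^ (g - 1) *
        ∑ j ∈ Finset.Icc 1 (k + 1),
          (Real.sin (π * (j : ℝ) / ((k : ℝ) + 2))) ^ ((2 : ℤ) - 2 * g) ∧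
    ∃ n : ℕ, 0 < n ∧
      (((k : ℝ) + 2) / 2) ^ (g - 1) *
          ∑ j ∈ Finset.Icc 1 (k + 1),
            (Real.sin (π * (j : ℝ) / ((k : ℝ) + 2))) ^ ((2 : ℤ) - 2 * g) = n := by
  set n : ℕ := k + 2 with hn_def
  have hn : 2 ≤ n := by omega
  have hn1 : n - 1 = k + 1 := by omega
  have hkn : ((k:ℝ) + 2) = (n:ℝ) := by rw [hn_def]; push_cast; ring
  -- rewrite the LHS as the trace sum
  have key : (((k : ℝ) + 2) / 2) ^ (g - 1) *
      ∑ j ∈ Finset.Icc 1 (k + 1),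
        (Real.sin (π * (j : ℝ) / ((k : ℝ) + 2))) ^ ((2 : ℤ) - 2 * g)
      = ∑ j ∈ Finset.Icc 1 (n-1), Tv n j ^ (g-1) := by
    rw [hkn, hn1.symm, Finset.mul_sum]
    apply Finset.sum_congr rfl
    intro j hj
    have hs := sin_pos_of_mem n hn hj
    have harg : π * (j : ℝ) / (n:ℝ) = π*(j:ℝ)/n := rfl
    have hexp : ((2 : ℤ) - 2 * (g:ℤ)) = -(((2*(g-1) : ℕ)):ℤ) := by
      push_cast [Nat.cast_sub (by omega : 1 ≤ g)]
      ring
    rw [hexp, zpow_neg, zpow_natCast, pow_mul, ← inv_pow, ← mul_pow]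
    unfold Tv
    rw [div_eq_mul_inv ((n:ℝ)/2)]
  rw [key]
  have hpos : 0 < ∑ j ∈ Finset.Icc 1 (n-1), Tv n j ^ (g-1) := by
    apply Finset.sum_pos
    · intro j hj
      have hs := sin_pos_of_mem n hn hj
      have : 0 < Tv n j := by
        unfold Tv
        positivity
      positivity
    · exact ⟨1, Finset.mem_Icc.mpr ⟨le_refl 1, by omega⟩⟩
  refine ⟨hpos, ?_⟩
  obtain ⟨z, hz⟩ := exists_int_sum (Finset.Icc 1 (n-1)) (fun a => Fv n (g-1) a a)
    (fun a ha => Fv_int n hn (g-1) a a ha ha)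
  rw [trace_eq n hn (g-1)] at hz
  have hzpos : 0 < z := by
    have : (0:ℝ) < (z:ℝ) := by rw [← hz]; exact hpos
    exact_mod_cast this
  refine ⟨z.toNat, by omega, ?_⟩
  rw [hz]
  congr 1
  omega
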